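/- arXiv:2506.10313 — 3 statements merged into one kernel-verified Lean document; each statement's English description precedes it below -/
import Mathlib

section
/- Let M : (0,1] → ℝ be positive and non-increasing. Then the function ε ↦ R(ε)/T(ε), where T(ε) = ∫_ε^1 dz/(M(z) z^4) and R(ε) = ∫_ε^1 dz/(M(z) z^3), is non-decreasing on the interval where T(ε) > 0. -/
open Set MeasureTheory intervalIntegral

lemma aux_integrable (M : ℝ → ℝ)
    (hMpos : ∀ z ∈ Ioc (0:ℝ) 1, 0 < M z)
    (hMmono : AntitoneOn M (Ioc (0:ℝ) 1))
    (a b : ℝ) (ha : 0 < a) (hab : a ≤ b) (hb : b ≤ 1) (k : ℕ) :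
    IntervalIntegrable (fun z => 1 / (M z * z ^ k)) volume a b := by
  have hsub : uIcc a b ⊆ Ioc (0:ℝ) 1 := by
    rw [uIcc_of_le hab]
    exact fun x hx => ⟨lt_of_lt_of_le ha hx.1, le_trans hx.2 hb⟩
  have hg : MonotoneOn (fun z => (M z)⁻¹) (uIcc a b) := by
    intro x hx y hy hxy
    have hx' := hsub hx
    have hy' := hsub hy
    exact inv_anti₀ (hMpos y hy') (hMmono hx' hy' hxy)
  have hgi : IntervalIntegrable (fun z => (M z)⁻¹) volume a b := hg.intervalIntegrable
  have hc : ContinuousOn (fun z : ℝ => (z ^ k)⁻¹) (uIcc a b) := by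
    apply ContinuousOn.inv₀ (by fun_prop)
    intro x hx
    have : 0 < x := lt_of_lt_of_le ha ((uIcc_of_le hab ▸ hx).1)
    positivity
  have := hgi.mul_continuousOn hc
  simpa [one_div, mul_inv, mul_comm] using this

/-- For positive non-increasing `M`, the ratio `R(ε)/T(ε)` of the regret and horizon
functionals is non-decreasing in `ε` on the region where `T(ε) > 0`. -/
theorem stmt2 (M : ℝ → ℝ)
    (hMpos : ∀ z ∈ Ioc (0:ℝ) 1, 0 < M z)
    (hMmono : AntitoneOn M (Ioc (0:ℝ) 1))
    (ε₁ ε₂ : ℝ) (h₁ : ε₁ ∈ Ioc (0:ℝ) 1) (h₂ : ε₂ ∈ Ioc (0:ℝ) 1) (h12 : ε₁ ≤ ε₂)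
    (hT1 : 0 < ∫ z in ε₁..1, 1 / (M z * z ^ 4))
    (hT2 : 0 < ∫ z in ε₂..1, 1 / (M z * z ^ 4)) :
    (∫ z in ε₁..1, 1 / (M z * z ^ 3)) / (∫ z in ε₁..1, 1 / (M z * z ^ 4)) ≤
      (∫ z in ε₂..1, 1 / (M z * z ^ 3)) / (∫ z in ε₂..1, 1 / (M z * z ^ 4)) := by
  obtain ⟨hε₁, hε₁1⟩ := h₁
  obtain ⟨hε₂, hε₂1⟩ := h₂
  set T₁ := ∫ z in ε₁..1, 1 / (M z * z ^ 4) with hT₁def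
  set T₂ := ∫ z in ε₂..1, 1 / (M z * z ^ 4) with hT₂def
  set R₁ := ∫ z in ε₁..1, 1 / (M z * z ^ 3) with hR₁def
  set R₂ := ∫ z in ε₂..1, 1 / (M z * z ^ 3) with hR₂def
  set A := ∫ z in ε₁..ε₂, 1 / (M z * z ^ 4) with hAdef
  set B := ∫ z in ε₁..ε₂, 1 / (M z * z ^ 3) with hBdef
  have hi4a : IntervalIntegrable (fun z => 1 / (M z * z ^ 4)) volume ε₁ ε₂ :=
    aux_integrable M hMpos hMmono ε₁ ε₂ hε₁ h12 hε₂1 4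
  have hi4b : IntervalIntegrable (fun z => 1 / (M z * z ^ 4)) volume ε₂ 1 :=
    aux_integrable M hMpos hMmono ε₂ 1 hε₂ hε₂1 le_rfl 4
  have hi3a : IntervalIntegrable (fun z => 1 / (M z * z ^ 3)) volume ε₁ ε₂ :=
    aux_integrable M hMpos hMmono ε₁ ε₂ hε₁ h12 hε₂1 3
  have hi3b : IntervalIntegrable (fun z => 1 / (M z * z ^ 3)) volume ε₂ 1 :=
    aux_integrable M hMpos hMmono ε₂ 1 hε₂ hε₂1 le_rfl 3
  have hT : T₁ = A + T₂ :=
    (intervalIntegral.integral_add_adjacent_intervals hi4a hi4b).symm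
  have hR : R₁ = B + R₂ :=
    (intervalIntegral.integral_add_adjacent_intervals hi3a hi3b).symm
  -- pointwise facts
  have hwpos : ∀ z ∈ Icc ε₁ 1, 0 ≤ 1 / (M z * z ^ 4) := by
    intro z hz
    have hz0 : 0 < z := lt_of_lt_of_le hε₁ hz.1
    have hM := hMpos z ⟨hz0, hz.2⟩
    positivity
  have hA : 0 ≤ A := by
    apply intervalIntegral.integral_nonneg h12
    intro z hz
    exact hwpos z ⟨hz.1, le_trans hz.2 hε₂1⟩
  have key3 : ∀ z, 0 < z → 1 / (M z * z ^ 3) = z * (1 / (M z * z ^ 4)) := by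
    intro z hz
    have hz' : z ≠ 0 := hz.ne'
    by_cases hM : M z = 0
    · simp [hM]
    · field_simp
  have hB : B ≤ ε₂ * A := by
    have : B ≤ ∫ z in ε₁..ε₂, ε₂ * (1 / (M z * z ^ 4)) := by
      apply intervalIntegral.integral_mono_on h12 hi3a (hi4a.const_mul ε₂)
      intro z hz
      have hz0 : 0 < z := lt_of_lt_of_le hε₁ hz.1
      rw [key3 z hz0]
      have hw := hwpos z ⟨hz.1, le_trans hz.2 hε₂1⟩
      exact mul_le_mul_of_nonneg_right hz.2 hw
    rwa [intervalIntegral.integral_const_mul] at this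
  have hR₂ : ε₂ * T₂ ≤ R₂ := by
    have : (∫ z in ε₂..1, ε₂ * (1 / (M z * z ^ 4))) ≤ R₂ := by
      apply intervalIntegral.integral_mono_on hε₂1 (hi4b.const_mul ε₂) hi3b
      intro z hz
      have hz0 : 0 < z := lt_of_lt_of_le hε₂ hz.1
      rw [key3 z hz0]
      have hw := hwpos z ⟨le_trans h12 hz.1, hz.2⟩
      exact mul_le_mul_of_nonneg_right hz.1 hw
    rwa [intervalIntegral.integral_const_mul] at this
  rw [div_le_div_iff₀ hT1 hT2]
  rw [hT, hR]
  nlinarith [mul_le_mul_of_nonneg_right hB (le_of_lt hT2),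
             mul_le_mul_of_nonneg_left hR₂ hA]
end

section
/- Consider a bipartite structure with finite group set G and arm set A, where each group g has a nonempty arm set A_g ⊆ A with ⋃_g A_g = A. Then the LP value t₀ := min over x ≥ 0 of t subject to (∑_{a ∈ A_g} x_{g,a} ≤ t for all g) and (∑_{g : a ∈ A_g} x_{g,a} ≥ 1 for all a ∈ A) equals max over nonempty G' ⊆ G of |Cov(G') \ Cov(G \ G')| / |G'|, where Cov(G') := ⋃_{g ∈ G'} A_g. -/
/-!
Every fractional schedule of length `t` spends, on the arms covered only by `G'`, at least
one unit per arm and at most `t` per group of `G'`, so `t` bounds every ratio.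
Conversely, let `q / N` be the largest ratio. No group outside the set `Γ(B)` of groups
covering an arm of a set `B` of arms covers an arm of `B`, so `B ⊆ Cov(Γ(B)) \ Cov(G \ Γ(B))`
and `N |B| ≤ q |Γ(B)|`. This is Hall's condition for the bipartite graph in which every arm
is split into `N` copies and every group into `q` copies, and a matching that saturates the
arm copies, scaled by `1 / N`, is a schedule of length `q / N`.
-/

open Finset

theorem exists_injective_prod_fin_of_mul_card_le {α β : Type*} [DecidableEq α] [DecidableEq β]
    (r : α → Finset β) (N q : ℕ)
    (hall : ∀ B : Finset α, N * #B ≤ q * #(B.biUnion r)) :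
    ∃ f : α × Fin N → β × Fin q, Function.Injective f ∧ ∀ p, (f p).1 ∈ r p.1 := by
  have hall' : ∀ s : Finset (α × Fin N),
      #s ≤ #(s.biUnion fun p => r p.1 ×ˢ (univ : Finset (Fin q))) := by
    intro s
    have hs : s ⊆ s.image Prod.fst ×ˢ univ := fun p hp =>
      mem_product.2 ⟨mem_image_of_mem _ hp, mem_univ _⟩
    have hbiUnion : s.biUnion (fun p => r p.1 ×ˢ (univ : Finset (Fin q)))
        = (s.image Prod.fst).biUnion r ×ˢ univ := by
      ext p
      simp [mem_biUnion, mem_product]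
    calc #s ≤ #(s.image Prod.fst) * N := by simpa using card_le_card hs
      _ ≤ #((s.image Prod.fst).biUnion r) * q := by linarith [hall (s.image Prod.fst)]
      _ = #(s.biUnion fun p => r p.1 ×ˢ univ) := by simp [hbiUnion, card_product]
  obtain ⟨f, hf, hfr⟩ := (all_card_le_biUnion_card_iff_exists_injective _).1 hall'
  exact ⟨f, hf, fun p => (mem_product.1 (hfr p)).1⟩

section Schedule

variable {G A : Type*} [Fintype G] [DecidableEq G] [DecidableEq A] (Ag : G → Finset A)

def coveringGroups (a : A) : Finset G := univ.filter fun g => a ∈ Ag g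

def exclusiveArms (G' : Finset G) : Finset A := G'.biUnion Ag \ (univ \ G').biUnion Ag

def IsFractionalSchedule (t : ℝ) (x : G → A → ℝ) : Prop :=
  (∀ g a, 0 ≤ x g a) ∧ (∀ g, ∑ a ∈ Ag g, x g a ≤ t) ∧
    ∀ a, 1 ≤ ∑ g ∈ coveringGroups Ag a, x g a

variable {Ag}

theorem notMem_of_mem_exclusiveArms {G' : Finset G} {a : A} (ha : a ∈ exclusiveArms Ag G')
    {g : G} (hg : g ∉ G') : a ∉ Ag g :=
  fun hag => (mem_sdiff.1 ha).2 (mem_biUnion.2 ⟨g, mem_sdiff.2 ⟨mem_univ g, hg⟩, hag⟩)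

theorem card_exclusiveArms_le {t : ℝ} {x : G → A → ℝ} (hx : IsFractionalSchedule Ag t x)
    (G' : Finset G) : (#(exclusiveArms Ag G') : ℝ) ≤ t * #G' := by
  obtain ⟨hx0, hload, hcover⟩ := hx
  calc (#(exclusiveArms Ag G') : ℝ) = ∑ _a ∈ exclusiveArms Ag G', (1 : ℝ) := by simp
    _ ≤ ∑ a ∈ exclusiveArms Ag G', ∑ g ∈ coveringGroups Ag a, x g a :=
        sum_le_sum fun a _ => hcover a
    _ = ∑ g ∈ G', ∑ a ∈ exclusiveArms Ag G' with a ∈ Ag g, x g a := by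
        simp only [coveringGroups, sum_filter]
        rw [sum_comm, ← sum_subset (subset_univ G')]
        intro g _ hg
        exact sum_eq_zero fun a ha => if_neg (notMem_of_mem_exclusiveArms ha hg)
    _ ≤ ∑ g ∈ G', ∑ a ∈ Ag g, x g a :=
        sum_le_sum fun g _ => sum_le_sum_of_subset_of_nonneg (fun a ha => (mem_filter.1 ha).2)
          fun a _ _ => hx0 g a
    _ ≤ ∑ _g ∈ G', t := sum_le_sum fun g _ => hload g
    _ = t * #G' := by rw [sum_const, nsmul_eq_mul, mul_comm]

theorem subset_exclusiveArms_biUnion_coveringGroups (hcov : ∀ a : A, ∃ g, a ∈ Ag g)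
    (B : Finset A) : B ⊆ exclusiveArms Ag (B.biUnion (coveringGroups Ag)) := by
  intro a ha
  obtain ⟨g, hg⟩ := hcov a
  have hmem : ∀ {g}, a ∈ Ag g → g ∈ B.biUnion (coveringGroups Ag) := fun hg =>
    mem_biUnion.2 ⟨a, ha, mem_filter.2 ⟨mem_univ _, hg⟩⟩
  refine mem_sdiff.2 ⟨mem_biUnion.2 ⟨g, hmem hg, hg⟩, fun h => ?_⟩
  obtain ⟨g', hg', hag'⟩ := mem_biUnion.1 h
  exact (mem_sdiff.1 hg').2 (hmem hag')

theorem exists_isFractionalSchedule_of_hall [Fintype A] (N q : ℕ) (hN : 0 < N)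
    (hall : ∀ B : Finset A, N * #B ≤ q * #(B.biUnion (coveringGroups Ag))) :
    ∃ x, IsFractionalSchedule Ag ((q : ℝ) / N) x := by
  obtain ⟨f, hf, hfr⟩ := exists_injective_prod_fin_of_mul_card_le _ N q hall
  have hNR : (0 : ℝ) < N := Nat.cast_pos.2 hN
  refine ⟨fun g a => (#{i | (f (a, i)).1 = g} : ℝ) / N, fun g a => by positivity, fun g => ?_,
    fun a => ?_⟩
  · have hload : ∑ a ∈ Ag g, #{i | (f (a, i)).1 = g} ≤ q :=
      calc ∑ a ∈ Ag g, #{i | (f (a, i)).1 = g}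
          ≤ ∑ a, #{i | (f (a, i)).1 = g} := sum_le_sum_of_subset (subset_univ _)
        _ = #{p | (f p).1 = g} := by simp only [card_filter, Fintype.sum_prod_type]
        _ ≤ #(univ : Finset (Fin q)) :=
            card_le_card_of_injOn (fun p => (f p).2) (fun _ _ => mem_univ _)
              fun p hp p' hp' h =>
                hf (Prod.ext ((mem_filter.1 hp).2.trans (mem_filter.1 hp').2.symm) h)
        _ = q := by simp
    rw [← sum_div, div_le_div_iff_of_pos_right hNR]
    exact_mod_cast hload
  · have hfiber : N = ∑ g ∈ coveringGroups Ag a, #{i | (f (a, i)).1 = g} := by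
      simpa using card_eq_sum_card_fiberwise (s := univ) (f := fun i : Fin N => (f (a, i)).1)
        fun i _ => hfr (a, i)
    rw [← sum_div, ← Nat.cast_sum, ← hfiber, div_self hNR.ne']

theorem exists_isFractionalSchedule_of_card_exclusiveArms_le [Fintype A]
    (hcov : ∀ a : A, ∃ g, a ∈ Ag g) (N q : ℕ) (hN : 0 < N)
    (h : ∀ G' : Finset G, (#(exclusiveArms Ag G') : ℝ) ≤ q / N * #G') :
    ∃ x, IsFractionalSchedule Ag ((q : ℝ) / N) x := by
  refine exists_isFractionalSchedule_of_hall N q hN fun B => ?_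
  have hB : (#B : ℝ) ≤ q / N * #(B.biUnion (coveringGroups Ag)) :=
    (Nat.cast_le.2 (card_le_card (subset_exclusiveArms_biUnion_coveringGroups hcov B))).trans
      (h _)
  rw [div_mul_eq_mul_div, le_div_iff₀ (Nat.cast_pos.2 hN), mul_comm] at hB
  exact_mod_cast hB

end Schedule

theorem stmt7_general {G A : Type*} [Fintype G] [Fintype A] [DecidableEq G] [DecidableEq A]
    (Ag : G → Finset A)
    (hcov : ∀ a : A, ∃ g, a ∈ Ag g) :
    sInf {t : ℝ | 0 ≤ t ∧ ∃ x : G → A → ℝ,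
        (∀ g a, 0 ≤ x g a) ∧
        (∀ g, ∑ a ∈ Ag g, x g a ≤ t) ∧
        (∀ a : A, 1 ≤ ∑ g ∈ univ.filter (fun g => a ∈ Ag g), x g a)} =
    sSup {r : ℝ | ∃ G' : Finset G, G'.Nonempty ∧
        r = ((G'.biUnion Ag \ (univ \ G').biUnion Ag).card : ℝ) / G'.card} := by
  change sInf {t | 0 ≤ t ∧ ∃ x, IsFractionalSchedule Ag t x} =
    sSup {r | ∃ G' : Finset G, G'.Nonempty ∧ r = (#(exclusiveArms Ag G') : ℝ) / #G'}
  set T := {r | ∃ G' : Finset G, G'.Nonempty ∧ r = (#(exclusiveArms Ag G') : ℝ) / #G'}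
  have hTfin : T.Finite :=
    (Set.finite_range fun G' : Finset G => (#(exclusiveArms Ag G') : ℝ) / #G').subset
      fun _ ⟨G', _, hr⟩ => ⟨G', hr.symm⟩
  have hT0 : 0 ≤ sSup T := Real.sSup_nonneg fun _ ⟨G', _, hr⟩ => hr ▸ by positivity
  have hbound : ∀ G' : Finset G, (#(exclusiveArms Ag G') : ℝ) ≤ sSup T * #G' := by
    intro G'
    rcases G'.eq_empty_or_nonempty with rfl | hG'
    · simp [exclusiveArms]
    · exact (div_le_iff₀ (Nat.cast_pos.2 (card_pos.2 hG'))).1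
        (le_csSup hTfin.bddAbove ⟨G', hG', rfl⟩)
  obtain ⟨q, N, hN, hqN⟩ : ∃ q N : ℕ, 0 < N ∧ sSup T = q / N := by
    rcases T.eq_empty_or_nonempty with hT | hT
    · exact ⟨0, 1, one_pos, by simp [hT]⟩
    · obtain ⟨G₀, hG₀, h⟩ := hT.csSup_mem hTfin
      exact ⟨_, _, card_pos.2 hG₀, h⟩
  obtain ⟨x, hx⟩ :=
    exists_isFractionalSchedule_of_card_exclusiveArms_le hcov N q hN (hqN ▸ hbound)
  refine le_antisymm (csInf_le ⟨0, fun _ ht => ht.1⟩ ⟨hT0, x, hqN ▸ hx⟩) ?_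
  refine le_csInf ⟨_, hT0, x, hqN ▸ hx⟩ fun t ⟨ht0, y, hy⟩ => Real.sSup_le ?_ ht0
  rintro _ ⟨G', hG', rfl⟩
  exact (div_le_iff₀ (Nat.cast_pos.2 (card_pos.2 hG'))).2 (card_exclusiveArms_le hy G')

/-- LP duality / Hall-type characterization of the minimum fractional time `t₀` needed
for the groups to pull every arm once:
`t₀ = max_{∅ ≠ G' ⊆ G} |Cov(G') \ Cov(G \ G')| / |G'|`. -/
theorem stmt7 {G A : Type*} [Fintype G] [Fintype A] [DecidableEq G] [DecidableEq A]
    (Ag : G → Finset A) (hne : ∀ g, (Ag g).Nonempty)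
    (hcov : ∀ a : A, ∃ g, a ∈ Ag g) :
    sInf {t : ℝ | 0 ≤ t ∧ ∃ x : G → A → ℝ,
        (∀ g a, 0 ≤ x g a) ∧
        (∀ g, ∑ a ∈ Ag g, x g a ≤ t) ∧
        (∀ a : A, 1 ≤ ∑ g ∈ univ.filter (fun g => a ∈ Ag g), x g a)} =
    sSup {r : ℝ | ∃ G' : Finset G, G'.Nonempty ∧
        r = ((G'.biUnion Ag \ (univ \ G').biUnion Ag).card : ℝ) / G'.card} :=
  stmt7_general Ag hcov
end

section
/- Let G be a finite set of groups, each with arm set A_g ⊆ A, and let λ* ∈ Δ_G be a probability distribution over groups written as λ* = ∑_{k=1}^K (p_k/|G_k|)·1_{G_k} for nested nonempty sets G_1 ⊊ ⋯ ⊊ G_K ⊆ G and p ∈ Δ_K with all p_k > 0. Then ∑_{a ∈ A} min_{g : a ∈ A_g} λ*_g = ∑_{k=1}^K p_k · |Cov(G_k) \ Cov(G \ G_k)| / |G_k|, where Cov(G') = ⋃_{g∈G'} A_g and the minimum over an empty set is 0. -/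
open Finset

/-- Layer-cake identity: for `λ* = ∑_k (p_k/|G_k|)·1_{G_k}` with nested nonempty `G_k` and
`p ∈ Δ_K`, we have `∑_a min_{g : a ∈ A_g} λ*_g = ∑_k p_k |Cov(G_k) \ Cov(G \ G_k)|/|G_k|`,
where the minimum over an empty set is `0`. -/
theorem stmt8 {G A : Type*} [Fintype G] [Fintype A] [DecidableEq G] [DecidableEq A]
    (Ag : G → Finset A) (K : ℕ) (hK : 1 ≤ K)
    (Gs : Fin K → Finset G) (p : Fin K → ℝ)
    (hnested : ∀ i j : Fin K, i < j → Gs i ⊂ Gs j)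
    (hne : ∀ k, (Gs k).Nonempty)
    (hp : ∀ k, 0 < p k) (hpsum : ∑ k, p k = 1)
    (lam : G → ℝ)
    (hlam : ∀ g, lam g = ∑ k, if g ∈ Gs k then p k / (Gs k).card else 0) :
    (∑ a : A, if h : (univ.filter (fun g => a ∈ Ag g)).Nonempty
        then (univ.filter (fun g => a ∈ Ag g)).inf' h lam else 0) =
    ∑ k, p k * ((Gs k).biUnion Ag \ (univ \ Gs k).biUnion Ag).card / (Gs k).card := by
  classical
  set S : A → Finset G := fun a => univ.filter (fun g => a ∈ Ag g) with hS
  have hmono : ∀ i j : Fin K, i ≤ j → Gs i ⊆ Gs j := by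
    intro i j hij
    rcases lt_or_eq_of_le hij with h | h
    · exact (hnested i j h).subset
    · exact h ▸ subset_rfl
  have hq0 : ∀ k : Fin K, (0:ℝ) ≤ p k / (Gs k).card := fun k =>
    div_nonneg (hp k).le (Nat.cast_nonneg _)
  have key : ∀ (a : A) (h : (S a).Nonempty),
      (S a).inf' h lam = ∑ k, if S a ⊆ Gs k then p k / (Gs k).card else 0 := by
    intro a ha
    obtain ⟨g, hg, hgeq⟩ := Finset.exists_mem_eq_inf' ha lam
    have hle : ∀ g' ∈ S a, lam g ≤ lam g' := by
      intro g' hg'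
      rw [← hgeq]
      exact Finset.inf'_le lam hg'
    rw [hgeq]
    apply le_antisymm
    · by_cases hall : ∀ k : Fin K, S a ⊆ Gs k
      · rw [hlam]
        apply Finset.sum_le_sum
        intro k _
        rw [if_pos (hall k)]
        split
        · exact le_refl _
        · exact hq0 k
      · push_neg at hall
        have hF : (univ.filter (fun k : Fin K => ¬ S a ⊆ Gs k)).Nonempty := by
          obtain ⟨k, hk⟩ := hall
          exact ⟨k, by simp [hk]⟩
        set k1 : Fin K := (univ.filter (fun k : Fin K => ¬ S a ⊆ Gs k)).max' hF with hk1def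
        have hk1 : ¬ S a ⊆ Gs k1 := by
          have := Finset.max'_mem (univ.filter (fun k : Fin K => ¬ S a ⊆ Gs k)) hF
          simpa using this
        have hgt : ∀ j : Fin K, k1 < j → S a ⊆ Gs j := by
          intro j hj
          by_contra hcon
          have : j ≤ k1 := Finset.le_max' _ j (by simp [hcon])
          exact absurd hj (not_lt.mpr this)
        obtain ⟨g', hg'S, hg'not⟩ := Finset.not_subset.mp hk1
        calc lam g ≤ lam g' := hle g' hg'S
          _ ≤ ∑ k, if S a ⊆ Gs k then p k / (Gs k).card else 0 := by
              rw [hlam]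
              apply Finset.sum_le_sum
              intro j _
              by_cases hj : g' ∈ Gs j
              · have hjgt : k1 < j := by
                  by_contra hcon
                  exact hg'not (hmono j k1 (not_lt.mp hcon) hj)
                rw [if_pos hj, if_pos (hgt j hjgt)]
              · rw [if_neg hj]
                split
                · exact hq0 j
                · exact le_refl _
    · rw [hlam]
      apply Finset.sum_le_sum
      intro k _
      by_cases hk : S a ⊆ Gs k
      · rw [if_pos hk, if_pos (hk hg)]
      · rw [if_neg hk]
        split
        · exact hq0 k
        · exact le_refl _
  have step1 : (∑ a : A, if h : (S a).Nonempty then (S a).inf' h lam else 0)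
      = ∑ a : A, ∑ k, if ((S a).Nonempty ∧ S a ⊆ Gs k) then p k / (Gs k).card else 0 := by
    apply Finset.sum_congr rfl
    intro a _
    by_cases ha : (S a).Nonempty
    · rw [dif_pos ha, key a ha]
      apply Finset.sum_congr rfl
      intro k _
      simp [ha]
    · rw [dif_neg ha]
      symm
      apply Finset.sum_eq_zero
      intro k _
      simp [ha]
  rw [step1, Finset.sum_comm]
  apply Finset.sum_congr rfl
  intro k _
  have hset : (univ.filter (fun a : A => (S a).Nonempty ∧ S a ⊆ Gs k))
      = (Gs k).biUnion Ag \ (univ \ Gs k).biUnion Ag := by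
    ext a
    simp only [Finset.mem_filter, Finset.mem_sdiff, Finset.mem_biUnion, Finset.mem_univ, true_and]
    constructor
    · rintro ⟨hne', hsub⟩
      obtain ⟨g, hg⟩ := hne'
      rw [hS] at hg
      simp only [Finset.mem_filter, Finset.mem_univ, true_and] at hg
      have hgk : g ∈ Gs k := hsub (by simp [hS, hg])
      refine ⟨⟨g, hgk, hg⟩, ?_⟩
      rintro ⟨g', hg', hA⟩
      exact hg' (hsub (by simp [hS, hA]))
    · rintro ⟨⟨g, hgk, hgA⟩, hnot⟩
      refine ⟨⟨g, by simp [hS, hgA]⟩, ?_⟩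
      intro g' hg'
      rw [hS] at hg'
      simp only [Finset.mem_filter, Finset.mem_univ, true_and] at hg'
      by_contra hcon
      exact hnot ⟨g', hcon, hg'⟩
  rw [← Finset.sum_filter, Finset.sum_const, hset, nsmul_eq_mul]
  ring
end
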